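/- Let C be a real symmetric positive definite n×n matrix and let B be a real skew-symmetric n×n matrix (Bᵀ = −B). Then det(C) · det(C + B C⁻¹ Bᵀ) = (det(C + B))². -/

import Mathlib

/-!
For skew-symmetric `B` one has `C + B C⁻¹ Bᵀ = C - B C⁻¹ B = (C + B) C⁻¹ (C - B)`, and for
symmetric `C` the matrix `C - B` is the transpose of `C + B`, so both factors have the same
determinant.
-/

open Matrix

namespace Matrix

variable {n R : Type*} [Fintype n] [DecidableEq n] [CommRing R]

theorem add_mul_nonsing_inv_mul_sub {C : Matrix n n R} (B : Matrix n n R) (hC : IsUnit C.det) :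
    (C + B) * C⁻¹ * (C - B) = C - B * C⁻¹ * B := by
  have expand : (C + B) * C⁻¹ * (C - B)
      = C * C⁻¹ * C - C * C⁻¹ * B + B * C⁻¹ * C - B * C⁻¹ * B := by
    noncomm_ring
  rw [expand, mul_nonsing_inv _ hC, nonsing_inv_mul_cancel_right _ _ hC, Matrix.one_mul,
    Matrix.one_mul]
  abel

theorem det_sub_eq_det_add_of_isSymm {C B : Matrix n n R} (hC : C.IsSymm) (hB : Bᵀ = -B) :
    (C - B).det = (C + B).det := by
  rw [← det_transpose (C + B), transpose_add, hC.eq, hB, sub_eq_add_neg]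

theorem det_mul_det_add_mul_nonsing_inv_mul_transpose {C B : Matrix n n R} (hC : C.IsSymm)
    (hCdet : IsUnit C.det) (hB : Bᵀ = -B) :
    C.det * (C + B * C⁻¹ * Bᵀ).det = (C + B).det ^ 2 := by
  have factor : C + B * C⁻¹ * Bᵀ = (C + B) * C⁻¹ * (C - B) := by
    rw [add_mul_nonsing_inv_mul_sub B hCdet, hB, Matrix.mul_neg, sub_eq_add_neg]
  rw [factor, det_mul, det_mul, det_sub_eq_det_add_of_isSymm hC hB]
  linear_combination (C + B).det ^ 2 * det_nonsing_inv_mul_det C hCdet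

end Matrix

theorem det_mul_det_add_skew_eq_sq {n : ℕ} (C B : Matrix (Fin n) (Fin n) ℝ)
    (hC : C.PosDef) (hB : Bᵀ = -B) :
    C.det * (C + B * C⁻¹ * Bᵀ).det = ((C + B).det) ^ 2 :=
  det_mul_det_add_mul_nonsing_inv_mul_transpose (isHermitian_iff_isSymm.mp hC.isHermitian)
    hC.det_pos.ne'.isUnit hB
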